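/- arXiv:math/0609801 — 4 statements merged into one kernel-verified Lean document; each statement's English description precedes it below -/
import Mathlib

section
/- With the notation of the extension construction: if (x₁,x₂) ∈ R, then the extended pseudometric satisfies r(x₁,x₂) = dis(R)/2. -/
open Metric Set

/-- The distortion of a relation `R ⊆ X₁ × X₂`. -/
noncomputable def distortion {X₁ X₂ : Type*} [MetricSpace X₁] [MetricSpace X₂]
    (R : Set (X₁ × X₂)) : ℝ :=
  sSup {d : ℝ | ∃ p ∈ R, ∃ q ∈ R, d = |dist p.1 q.1 - dist p.2 q.2|}

/-- The extension of the metrics on `X₁` and `X₂` to the disjoint union `X₁ ⊔ X₂`. -/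
noncomputable def glueDist {X₁ X₂ : Type*} [MetricSpace X₁] [MetricSpace X₂]
    (R : Set (X₁ × X₂)) (D : ℝ) : X₁ ⊕ X₂ → X₁ ⊕ X₂ → ℝ
  | Sum.inl x, Sum.inl x' => dist x x'
  | Sum.inr y, Sum.inr y' => dist y y'
  | Sum.inl x, Sum.inr y => sInf {d : ℝ | ∃ p ∈ R, d = dist x p.1 + D / 2 + dist p.2 y}
  | Sum.inr y, Sum.inl x => sInf {d : ℝ | ∃ p ∈ R, d = dist x p.1 + D / 2 + dist p.2 y}

/-- For any pair `(x₁, x₂) ∈ R`, the extended pseudometric satisfies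
`r(x₁, x₂) = dis(R) / 2`. -/
theorem glueDist_of_mem {X₁ X₂ : Type*} [MetricSpace X₁] [MetricSpace X₂]
    (R : Set (X₁ × X₂)) (hR : R.Nonempty)
    (hbdd : BddAbove {d : ℝ | ∃ p ∈ R, ∃ q ∈ R, d = |dist p.1 q.1 - dist p.2 q.2|})
    (x₁ : X₁) (x₂ : X₂) (hx : (x₁, x₂) ∈ R) :
    glueDist R (distortion R) (Sum.inl x₁) (Sum.inr x₂) = distortion R / 2 := by
  show sInf _ = _
  have hlb : ∀ d ∈ {d : ℝ | ∃ p ∈ R, d = dist x₁ p.1 + distortion R / 2 + dist p.2 x₂},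
      distortion R / 2 ≤ d := by
    rintro d ⟨p, hp, rfl⟩
    have h1 := dist_nonneg (x := x₁) (y := p.1)
    have h2 := dist_nonneg (x := p.2) (y := x₂)
    linarith
  refine le_antisymm ?_ ?_
  · refine csInf_le ⟨_, hlb⟩ ⟨(x₁, x₂), hx, ?_⟩
    simp
  · exact le_csInf ⟨_, (x₁, x₂), hx, rfl⟩ hlb
end

section
/- With the notation of the extension construction: the Hausdorff distance in (X₁ ⊔ X₂, r) between the projection π₁R of R onto X₁ and the projection π₂R of R onto X₂ equals dis(R)/2. -/
open Metric Set

/-- The Hausdorff distance (defined via open `ε`-neighborhoods with respect to the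
pseudometric `r`) between two subsets `A`, `B` of a set carrying `r`. -/
noncomputable def hausdorffDistFor {Z : Type*} (r : Z → Z → ℝ) (A B : Set Z) : ℝ :=
  sInf {ε : ℝ | 0 < ε ∧ (∀ a ∈ A, ∃ b ∈ B, r a b < ε) ∧ (∀ b ∈ B, ∃ a ∈ A, r b a < ε)}

/-- In `(X₁ ⊔ X₂, glueDist R (dis R))` the Hausdorff distance between the projection of `R`
to `X₁` and the projection of `R` to `X₂` equals `dis(R) / 2`. -/
theorem hausdorffDist_glue_projections {X₁ X₂ : Type*} [MetricSpace X₁] [MetricSpace X₂]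
    (R : Set (X₁ × X₂)) (hR : R.Nonempty)
    (hbdd : BddAbove {d : ℝ | ∃ p ∈ R, ∃ q ∈ R, d = |dist p.1 q.1 - dist p.2 q.2|}) :
    hausdorffDistFor (glueDist R (distortion R))
      (Sum.inl '' (Prod.fst '' R)) (Sum.inr '' (Prod.snd '' R)) = distortion R / 2 := by
  obtain ⟨p₀, hp₀⟩ := hR
  set D := distortion R with hDdef
  have hD0 : 0 ≤ D :=
    le_csSup hbdd ⟨p₀, hp₀, p₀, hp₀, by simp⟩
  have hge : ∀ (x : X₁) (y : X₂), D / 2 ≤ glueDist R D (Sum.inl x) (Sum.inr y) := by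
    intro x y
    show D / 2 ≤ sInf {d : ℝ | ∃ p ∈ R, d = dist x p.1 + D / 2 + dist p.2 y}
    refine le_csInf ⟨dist x p₀.1 + D / 2 + dist p₀.2 y, p₀, hp₀, rfl⟩ ?_
    rintro d ⟨p, hp, rfl⟩
    have h1 : (0:ℝ) ≤ dist x p.1 := dist_nonneg
    have h2 : (0:ℝ) ≤ dist p.2 y := dist_nonneg
    linarith
  have hle : ∀ p ∈ R, sInf {d : ℝ | ∃ q ∈ R, d = dist p.1 q.1 + D / 2 + dist q.2 p.2} ≤ D / 2 := by
    intro p hp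
    apply csInf_le
    · refine ⟨D / 2, ?_⟩
      rintro d ⟨q, hq, rfl⟩
      have h1 : (0:ℝ) ≤ dist p.1 q.1 := dist_nonneg
      have h2 : (0:ℝ) ≤ dist q.2 p.2 := dist_nonneg
      linarith
    · exact ⟨p, hp, by simp⟩
  have hset : {ε : ℝ | 0 < ε ∧
      (∀ a ∈ Sum.inl '' (Prod.fst '' R), ∃ b ∈ Sum.inr '' (Prod.snd '' R),
        glueDist R D a b < ε) ∧
      (∀ b ∈ Sum.inr '' (Prod.snd '' R), ∃ a ∈ Sum.inl '' (Prod.fst '' R),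
        glueDist R D b a < ε)} = Set.Ioi (D / 2) := by
    ext ε
    constructor
    · rintro ⟨hε, h1, h2⟩
      obtain ⟨b, hb, hlt⟩ := h1 (Sum.inl p₀.1) ⟨p₀.1, ⟨p₀, hp₀, rfl⟩, rfl⟩
      obtain ⟨y, -, rfl⟩ := hb
      exact lt_of_le_of_lt (hge p₀.1 y) hlt
    · intro hε
      have hε' : D / 2 < ε := hε
      refine ⟨by linarith, ?_, ?_⟩
      · rintro a ⟨x, ⟨p, hp, rfl⟩, rfl⟩
        refine ⟨Sum.inr p.2, ⟨p.2, ⟨p, hp, rfl⟩, rfl⟩, ?_⟩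
        show sInf {d : ℝ | ∃ q ∈ R, d = dist p.1 q.1 + D / 2 + dist q.2 p.2} < ε
        exact lt_of_le_of_lt (hle p hp) hε'
      · rintro b ⟨y, ⟨p, hp, rfl⟩, rfl⟩
        refine ⟨Sum.inl p.1, ⟨p.1, ⟨p, hp, rfl⟩, rfl⟩, ?_⟩
        show sInf {d : ℝ | ∃ q ∈ R, d = dist p.1 q.1 + D / 2 + dist q.2 p.2} < ε
        exact lt_of_le_of_lt (hle p hp) hε'
  unfold hausdorffDistFor
  rw [hset]
  exact csInf_Ioi
end

section
/- Let X, Y be complete separable metric spaces with metrics r_X, r_Y and Borel probability measures μ_X, μ_Y. Define the Eurandom distance d_Eur(X,Y) := inf over couplings μ̃ of μ_X, μ_Y of inf{ε > 0 : μ̃⊗μ̃{((x,y),(x',y')) : |r_X(x,x') − r_Y(y,y')| ≥ ε} < ε}. If there exist a metric space (Z,r_Z), isometric embeddings φ_X : X → Z, φ_Y : Y → Z and a coupling μ̂ of (φ_X)_*μ_X and (φ_Y)_*μ_Y with μ̂{(z,z') : r_Z(z,z') ≥ δ} < δ, then d_Eur(X,Y) < 2δ. -/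
open Metric Set MeasureTheory ENNReal Filter Topology

/-- The Eurandom distance between two metric measure spaces:
`inf` over couplings `μ̃` of `μ_X` and `μ_Y` of
`inf {ε > 0 : μ̃⊗μ̃ {((x,y),(x',y')) : |r_X(x,x') − r_Y(y,y')| ≥ ε} < ε}`. -/
noncomputable def eurandomDist {X Y : Type*} [MetricSpace X] [MetricSpace Y]
    [MeasurableSpace X] [MeasurableSpace Y]
    (μX : Measure X) (μY : Measure Y) : ℝ :=
  sInf {ε : ℝ | 0 < ε ∧ ∃ m : Measure (X × Y),
    IsProbabilityMeasure m ∧ m.map Prod.fst = μX ∧ m.map Prod.snd = μY ∧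
    (m.prod m) {q : (X × Y) × (X × Y) |
      ε ≤ |dist q.1.1 q.2.1 - dist q.1.2 q.2.2|} < ENNReal.ofReal ε}

/-!
A coupling `μ̂` of the embedded measures is carried by `φX(X) × φY(Y)`, so pulling it back along
measurable left inverses of `φX` and `φY` gives a coupling `m` of `μX` and `μY` whose image under
`φX × φY` is `μ̂` again. For two independent samples `(x, y)`, `(x', y')` of `m`, the triangle
inequality in `Z` gives `|r_X(x, x') - r_Y(y, y')| ≤ r_Z(φX x, φY y) + r_Z(φX x', φY y')`, so a
distortion `≥ 2t` forces one of the two samples to have `r_Z ≥ t`, an event of `m ⊗ m`-measure at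
most `2 μ̂ {r_Z ≥ t}`. Since `t ↦ μ̂ {r_Z ≥ t}` is left-continuous, the strict inequality
`μ̂ {r_Z ≥ δ} < δ` persists for some `t < δ`, whence `d_Eur ≤ 2t < 2δ`.
-/

theorem MeasurableEmbedding.exists_coupling_map_prodMap_eq
    {X Y Z W : Type*} [MeasurableSpace X] [MeasurableSpace Y] [MeasurableSpace Z]
    [MeasurableSpace W] [Nonempty X] [Nonempty Y] {eX : X → Z} {eY : Y → W}
    (hX : MeasurableEmbedding eX) (hY : MeasurableEmbedding eY)
    {μX : Measure X} {μY : Measure Y} {μ : Measure (Z × W)}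
    (h1 : μ.map Prod.fst = μX.map eX) (h2 : μ.map Prod.snd = μY.map eY) :
    ∃ m : Measure (X × Y), m.map Prod.fst = μX ∧ m.map Prod.snd = μY ∧
      m.map (Prod.map eX eY) = μ := by
  obtain ⟨ψX, hψX, hψXeX⟩ := hX.exists_measurable_extend measurable_id fun _ => ‹Nonempty X›
  obtain ⟨ψY, hψY, hψYeY⟩ := hY.exists_measurable_extend measurable_id fun _ => ‹Nonempty Y›
  have hψ : Measurable (Prod.map ψX ψY) := hψX.prodMap hψY
  refine ⟨μ.map (Prod.map ψX ψY), ?_, ?_, ?_⟩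
  · rw [Measure.map_map measurable_fst hψ, Prod.map_fst', ← Measure.map_map hψX measurable_fst,
      h1, Measure.map_map hψX hX.measurable, hψXeX, Measure.map_id]
  · rw [Measure.map_map measurable_snd hψ, Prod.map_snd', ← Measure.map_map hψY measurable_snd,
      h2, Measure.map_map hψY hY.measurable, hψYeY, Measure.map_id]
  have hrangeX : ∀ᵐ p ∂μ, p.1 ∈ range eX := ae_of_ae_map measurable_fst.aemeasurable <| by
    rw [h1, hX.ae_map_iff]
    exact ae_of_all _ mem_range_self
  have hrangeY : ∀ᵐ p ∂μ, p.2 ∈ range eY := ae_of_ae_map measurable_snd.aemeasurable <| by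
    rw [h2, hY.ae_map_iff]
    exact ae_of_all _ mem_range_self
  rw [Measure.map_map (hX.measurable.prodMap hY.measurable) hψ]
  conv_rhs => rw [← Measure.map_id (μ := μ)]
  refine Measure.map_congr ?_
  filter_upwards [hrangeX, hrangeY] with p ⟨x, hx⟩ ⟨y, hy⟩
  have hψXx : ψX (eX x) = x := congrFun hψXeX x
  have hψYy : ψY (eY y) = y := congrFun hψYeY y
  ext
  · simp only [Function.comp_apply, Prod.map_fst, id_eq, ← hx, hψXx]
  · simp only [Function.comp_apply, Prod.map_snd, id_eq, ← hy, hψYy]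

theorem exists_lt_measure_setOf_le_lt_ofReal {α : Type*} [MeasurableSpace α] {ν : Measure α}
    [IsFiniteMeasure ν] {f : α → ℝ} (hf : Measurable f) {δ : ℝ}
    (h : ν {a | δ ≤ f a} < ENNReal.ofReal δ) :
    ∃ t < δ, ν {a | t ≤ f a} < ENNReal.ofReal t := by
  obtain ⟨u, hu_mono, hu_lt, hu_lim⟩ := exists_seq_strictMono_tendsto δ
  have hInter : ⋂ n, {a | u n ≤ f a} = {a | δ ≤ f a} := by
    ext a
    simp only [mem_iInter, mem_ofPred_eq]
    exact ⟨fun ha => le_of_tendsto' hu_lim ha, fun ha n => (hu_lt n).le.trans ha⟩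
  have hmeas : Tendsto (fun n => ν {a | u n ≤ f a}) atTop (𝓝 (ν {a | δ ≤ f a})) := by
    rw [← hInter]
    exact tendsto_measure_iInter_atTop
      (fun n => (hf measurableSet_Ici).nullMeasurableSet)
      (fun n k hnk a ha => (hu_mono.monotone hnk).trans ha) ⟨0, measure_ne_top _ _⟩
  obtain ⟨n, hn⟩ := (hmeas.eventually_lt (ENNReal.tendsto_ofReal hu_lim) h).exists
  exact ⟨u n, hu_lt n, hn⟩

theorem Isometry.abs_dist_sub_dist_le {X Y Z : Type*} [PseudoMetricSpace X]
    [PseudoMetricSpace Y] [PseudoMetricSpace Z] {φX : X → Z} {φY : Y → Z}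
    (hφX : Isometry φX) (hφY : Isometry φY) (x x' : X) (y y' : Y) :
    |dist x x' - dist y y'| ≤ dist (φX x) (φY y) + dist (φX x') (φY y') := by
  simpa only [Real.dist_eq, hφX.dist_eq, hφY.dist_eq] using
    dist_dist_dist_le (φX x) (φX x') (φY y) (φY y')

theorem prod_self_setOf_le_abs_dist_sub_dist_le {X Y : Type*} [PseudoMetricSpace X]
    [PseudoMetricSpace Y] [MeasurableSpace X] [MeasurableSpace Y] (m : Measure (X × Y))
    [IsProbabilityMeasure m] {f : X × Y → ℝ}
    (hf : ∀ p q : X × Y, |dist p.1 q.1 - dist p.2 q.2| ≤ f p + f q) (t : ℝ) :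
    (m.prod m) {q | 2 * t ≤ |dist q.1.1 q.2.1 - dist q.1.2 q.2.2|} ≤ 2 * m {p | t ≤ f p} := by
  set A := {p : X × Y | t ≤ f p}
  calc (m.prod m) {q | 2 * t ≤ |dist q.1.1 q.2.1 - dist q.1.2 q.2.2|}
      ≤ (m.prod m) (A ×ˢ univ ∪ univ ×ˢ A) := by
        refine measure_mono fun q hq => ?_
        by_contra hqA
        simp only [A, mem_union, mem_prod, mem_ofPred_eq, mem_univ, and_true, true_and, not_or,
          not_le] at hq hqA
        linarith [hf q.1 q.2]
    _ ≤ (m.prod m) (A ×ˢ univ) + (m.prod m) (univ ×ˢ A) := measure_union_le _ _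
    _ = 2 * m A := by
        rw [Measure.prod_prod, Measure.prod_prod, measure_univ, mul_one, one_mul, two_mul]

theorem eurandomDist_le_of_coupling {X Y : Type*} [MetricSpace X] [MetricSpace Y]
    [MeasurableSpace X] [MeasurableSpace Y] {μX : Measure X} {μY : Measure Y}
    (m : Measure (X × Y)) [IsProbabilityMeasure m]
    (h1 : m.map Prod.fst = μX) (h2 : m.map Prod.snd = μY) {ε : ℝ} (hε : 0 < ε)
    (h : (m.prod m) {q : (X × Y) × (X × Y) |
      ε ≤ |dist q.1.1 q.2.1 - dist q.1.2 q.2.2|} < ENNReal.ofReal ε) :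
    eurandomDist μX μY ≤ ε :=
  csInf_le ⟨0, fun _ hε' => hε'.1.le⟩ ⟨hε, m, ‹_›, h1, h2, h⟩

theorem eurandomDist_lt_of_embedding_coupling_general {X Y Z : Type*}
    [MetricSpace X] [MetricSpace Y] [MetricSpace Z]
    [CompleteSpace X] [TopologicalSpace.SeparableSpace X]
    [CompleteSpace Y] [TopologicalSpace.SeparableSpace Y]
    [MeasurableSpace X] [BorelSpace X] [MeasurableSpace Y] [BorelSpace Y]
    [MeasurableSpace Z] [BorelSpace Z]
    (μX : Measure X) (μY : Measure Y)
    [IsProbabilityMeasure μX] [IsProbabilityMeasure μY]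
    (φX : X → Z) (hφX : Isometry φX) (φY : Y → Z) (hφY : Isometry φY)
    (μh : Measure (Z × Z))
    (h1 : μh.map Prod.fst = μX.map φX) (h2 : μh.map Prod.snd = μY.map φY)
    (δ : ℝ)
    (h : μh {p : Z × Z | δ ≤ dist p.1 p.2} < ENNReal.ofReal δ) :
    eurandomDist μX μY < 2 * δ := by
  have := nonempty_of_isProbabilityMeasure μX
  have := nonempty_of_isProbabilityMeasure μY
  obtain ⟨m, hm1, hm2, hmap⟩ := MeasurableEmbedding.exists_coupling_map_prodMap_eq
    hφX.isClosedEmbedding.measurableEmbedding hφY.isClosedEmbedding.measurableEmbedding h1 h2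
  have : IsProbabilityMeasure (m.map Prod.fst) := hm1 ▸ inferInstance
  have : IsProbabilityMeasure m := Measure.isProbabilityMeasure_of_map Prod.fst
  set f : X × Y → ℝ := fun p => dist (φX p.1) (φY p.2)
  have hf : Measurable f :=
    ((hφX.continuous.comp continuous_fst).dist (hφY.continuous.comp continuous_snd)).measurable
  have hδ : m {p | δ ≤ f p} < ENNReal.ofReal δ :=
    (hmap ▸ Measure.le_map_apply (hφX.continuous.measurable.prodMap
      hφY.continuous.measurable).aemeasurable {p : Z × Z | δ ≤ dist p.1 p.2}).trans_lt h
  obtain ⟨t, htδ, ht⟩ := exists_lt_measure_setOf_le_lt_ofReal hf hδ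
  have ht0 : 0 < t := ENNReal.ofReal_pos.1 (pos_of_gt ht)
  have hdistortion := prod_self_setOf_le_abs_dist_sub_dist_le m
    (fun p q => hφX.abs_dist_sub_dist_le hφY p.1 q.1 p.2 q.2) t
  calc eurandomDist μX μY ≤ 2 * t := eurandomDist_le_of_coupling m hm1 hm2 (by positivity) <|
        calc _ ≤ 2 * m {p | t ≤ f p} := hdistortion
          _ < 2 * ENNReal.ofReal t := ENNReal.mul_lt_mul_right two_ne_zero ofNat_ne_top ht
          _ = ENNReal.ofReal (2 * t) := by rw [ENNReal.ofReal_mul zero_le_two, ofReal_ofNat]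
    _ < 2 * δ := by linarith

/-- If `μ_X` and `μ_Y` admit isometric embeddings into a common metric space `Z` and a
coupling `μ̂` of the pushforwards with `μ̂ {(z,z') : r_Z(z,z') ≥ δ} < δ`, then
`d_Eur(X, Y) < 2δ`.  (In particular `d_Eur ≤ 2 d_GPr`.) -/
theorem eurandomDist_lt_of_embedding_coupling {X Y Z : Type*}
    [MetricSpace X] [MetricSpace Y] [MetricSpace Z]
    [CompleteSpace X] [TopologicalSpace.SeparableSpace X]
    [CompleteSpace Y] [TopologicalSpace.SeparableSpace Y]
    [MeasurableSpace X] [BorelSpace X] [MeasurableSpace Y] [BorelSpace Y]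
    [MeasurableSpace Z] [BorelSpace Z]
    (μX : Measure X) (μY : Measure Y)
    [IsProbabilityMeasure μX] [IsProbabilityMeasure μY]
    (φX : X → Z) (hφX : Isometry φX) (φY : Y → Z) (hφY : Isometry φY)
    (μh : Measure (Z × Z)) [IsProbabilityMeasure μh]
    (h1 : μh.map Prod.fst = μX.map φX) (h2 : μh.map Prod.snd = μY.map φY)
    (δ : ℝ) (hδ : 0 < δ)
    (h : μh {p : Z × Z | δ ≤ dist p.1 p.2} < ENNReal.ofReal δ) :
    eurandomDist μX μY < 2 * δ :=
  eurandomDist_lt_of_embedding_coupling_general μX μY φX hφX φY hφY μh h1 h2 δ h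
end

section
/- Let X, Y be complete separable metric spaces with Borel probability measures μ_X, μ_Y, and let μ̃ be a coupling of μ_X and μ_Y such that μ̃⊗μ̃{((x,y),(x',y')) : |r_X(x,x') − r_Y(y,y')| > 2δ} < δ⁴ for some δ ∈ (0,1/2). Suppose x₀ ∈ X satisfies μ_X(B_ε(x₀)) > δ. Then there exists y₀ ∈ Y with μ̃(B_ε(x₀) × B_{2(ε+δ)}(y₀)) ≥ (1 − δ²) μ_X(B_ε(x₀)). -/
/-!
If no `y₀` works, then for every `y` the set `B_ε(x₀) × (Y ∖ B_{2(ε+δ)}(y))` has `μ̃`-mass at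
least `δ² μ_X(B_ε(x₀))`. For `(x, y), (x', y')` with `x, x' ∈ B_ε(x₀)` and `y'` outside
`B_{2(ε+δ)}(y)` we have `r_X(x, x') < 2ε ≤ r_Y(y, y') - 2δ`, so integrating over the first pair
shows that the distortion exceeds `2δ` on a set of `μ̃ ⊗ μ̃`-measure at least
`δ² μ_X(B_ε(x₀))² > δ⁴`.
-/

open Metric Set MeasureTheory ENNReal

theorem two_mul_lt_abs_dist_sub_dist {X Y : Type*} [PseudoMetricSpace X] [PseudoMetricSpace Y]
    {x₀ x x' : X} {y y' : Y} {ε δ : ℝ} (hx : x ∈ ball x₀ ε) (hx' : x' ∈ ball x₀ ε)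
    (hy : 2 * (ε + δ) ≤ dist y y') :
    2 * δ < |dist x x' - dist y y'| := by
  have hxx' : dist x x' < 2 * ε := by
    linarith [dist_triangle_right x x' x₀, mem_ball.mp hx, mem_ball.mp hx']
  rw [abs_sub_comm]
  exact (by linarith : 2 * δ < dist y y' - dist x x').trans_le (le_abs_self _)

theorem mul_le_measure_sdiff_of_measure_inter_le {α : Type*} [MeasurableSpace α]
    {μ : Measure α} [IsFiniteMeasure μ] {s t : Set α} {a : ℝ≥0∞} (ht : MeasurableSet t)
    (ha : a ≤ 1) (h : μ (s ∩ t) ≤ (1 - a) * μ s) :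
    a * μ s ≤ μ (s \ t) := by
  refine ENNReal.le_of_add_le_add_right (measure_ne_top μ (s ∩ t)) ?_
  calc a * μ s + μ (s ∩ t) ≤ a * μ s + (1 - a) * μ s := by gcongr
    _ = μ s := by rw [← add_mul, add_tsub_cancel_of_le ha, one_mul]
    _ = μ (s \ t) + μ (s ∩ t) := (measure_sdiff_add_inter s ht).symm

theorem Measure.mul_le_prod_apply {α β : Type*} [MeasurableSpace α] [MeasurableSpace β]
    {μ : Measure α} {ν : Measure β} [SFinite ν] {s : Set (α × β)} {A : Set α} {c : ℝ≥0∞}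
    (h : ∀ a ∈ A, c ≤ ν (Prod.mk a ⁻¹' s)) :
    c * μ A ≤ μ.prod ν s := by
  have hT : MeasurableSet (toMeasurable (μ.prod ν) s) := measurableSet_toMeasurable _ _
  calc c * μ A = ∫⁻ _ in A, c ∂μ := (setLIntegral_const A c).symm
    _ ≤ ∫⁻ a in A, ν (Prod.mk a ⁻¹' toMeasurable (μ.prod ν) s) ∂μ :=
      setLIntegral_mono (measurable_measure_prodMk_left hT) fun a ha =>
        (h a ha).trans (measure_mono (preimage_mono (subset_toMeasurable _ _)))
    _ ≤ ∫⁻ a, ν (Prod.mk a ⁻¹' toMeasurable (μ.prod ν) s) ∂μ := setLIntegral_le_lintegral _ _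
    _ = μ.prod ν s := by rw [← Measure.prod_apply hT, measure_toMeasurable]

theorem ENNReal.ofReal_pow_four_lt_mul {δ : ℝ} {m : ℝ≥0∞} (hδ : 0 < δ) (hm : ENNReal.ofReal δ < m) :
    ENNReal.ofReal (δ ^ 4) < ENNReal.ofReal (δ ^ 2) * m * m := by
  have hd : ENNReal.ofReal δ ^ 2 ≠ 0 := pow_ne_zero 2 (ENNReal.ofReal_pos.mpr hδ).ne'
  rw [ENNReal.ofReal_pow hδ.le, ENNReal.ofReal_pow hδ.le, mul_assoc]
  calc ENNReal.ofReal δ ^ 4 = ENNReal.ofReal δ ^ 2 * (ENNReal.ofReal δ * ENNReal.ofReal δ) := by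
        ring
    _ < ENNReal.ofReal δ ^ 2 * (m * m) :=
      ENNReal.mul_lt_mul_right hd (pow_ne_top ofReal_ne_top) (ENNReal.mul_lt_mul hm hm)

theorem exists_matching_center_general {X Y : Type*} [MetricSpace X] [MetricSpace Y]
    [MeasurableSpace X] [BorelSpace X] [MeasurableSpace Y] [BorelSpace Y]
    (μX : Measure X)
    (μt : Measure (X × Y)) [IsProbabilityMeasure μt]
    (h1 : μt.map Prod.fst = μX)
    (δ : ℝ) (hδ : δ ∈ Set.Ioo (0 : ℝ) (1 / 2))
    (hcpl : (μt.prod μt) {q : (X × Y) × (X × Y) |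
        2 * δ < |dist q.1.1 q.2.1 - dist q.1.2 q.2.2|} < ENNReal.ofReal (δ ^ 4))
    (ε : ℝ) (x₀ : X) (hx₀ : ENNReal.ofReal δ < μX (Metric.ball x₀ ε)) :
    ∃ y₀ : Y, (1 - ENNReal.ofReal (δ ^ 2)) * μX (Metric.ball x₀ ε)
        ≤ μt (Metric.ball x₀ ε ×ˢ Metric.ball y₀ (2 * (ε + δ))) := by
  by_contra! hnone
  set B := ball x₀ ε
  have hB : μt (Prod.fst ⁻¹' B) = μX B := by
    rw [← h1, Measure.map_apply measurable_fst measurableSet_ball]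
  have hδ1 : ENNReal.ofReal (δ ^ 2) ≤ 1 := ofReal_le_one.mpr (by nlinarith [hδ.1, hδ.2])
  have hfar : ∀ y, ENNReal.ofReal (δ ^ 2) * μX B ≤ μt (B ×ˢ (ball y (2 * (ε + δ)))ᶜ) := by
    intro y
    have hnear := (hnone y).le
    rw [prod_eq, ← hB] at hnear
    rw [prod_eq, preimage_compl, ← Set.sdiff_eq, ← hB]
    exact mul_le_measure_sdiff_of_measure_inter_le
      (measurableSet_ball.preimage measurable_snd) hδ1 hnear
  have hbad : ENNReal.ofReal (δ ^ 2) * μX B * μX B ≤ (μt.prod μt) {q : (X × Y) × (X × Y) |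
      2 * δ < |dist q.1.1 q.2.1 - dist q.1.2 q.2.2|} := by
    rw [← hB]
    refine Measure.mul_le_prod_apply fun p hp => (hB ▸ hfar p.2).trans (measure_mono ?_)
    rintro ⟨x', y'⟩ ⟨hx', hy'⟩
    exact two_mul_lt_abs_dist_sub_dist hp hx' (not_lt.mp fun h => hy' (mem_ball'.mpr h))
  exact (hcpl.trans_le' hbad).not_gt (ENNReal.ofReal_pow_four_lt_mul hδ.1 hx₀)

/-- If a coupling `μ̃` of `μ_X` and `μ_Y` satisfies
`μ̃⊗μ̃ {((x,y),(x',y')) : |r_X(x,x') − r_Y(y,y')| > 2δ} < δ⁴` for some `δ ∈ (0, 1/2)`,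
and `x₀` satisfies `μ_X(B_ε(x₀)) > δ`, then there is `y₀ ∈ Y` with
`μ̃(B_ε(x₀) × B_{2(ε+δ)}(y₀)) ≥ (1 − δ²) μ_X(B_ε(x₀))`. -/
theorem exists_matching_center {X Y : Type*} [MetricSpace X] [MetricSpace Y]
    [CompleteSpace X] [TopologicalSpace.SeparableSpace X]
    [CompleteSpace Y] [TopologicalSpace.SeparableSpace Y]
    [MeasurableSpace X] [BorelSpace X] [MeasurableSpace Y] [BorelSpace Y]
    (μX : Measure X) (μY : Measure Y)
    [IsProbabilityMeasure μX] [IsProbabilityMeasure μY]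
    (μt : Measure (X × Y)) [IsProbabilityMeasure μt]
    (h1 : μt.map Prod.fst = μX) (h2 : μt.map Prod.snd = μY)
    (δ : ℝ) (hδ : δ ∈ Set.Ioo (0 : ℝ) (1 / 2))
    (hcpl : (μt.prod μt) {q : (X × Y) × (X × Y) |
        2 * δ < |dist q.1.1 q.2.1 - dist q.1.2 q.2.2|} < ENNReal.ofReal (δ ^ 4))
    (ε : ℝ) (x₀ : X) (hx₀ : ENNReal.ofReal δ < μX (Metric.ball x₀ ε)) :
    ∃ y₀ : Y, (1 - ENNReal.ofReal (δ ^ 2)) * μX (Metric.ball x₀ ε)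
        ≤ μt (Metric.ball x₀ ε ×ˢ Metric.ball y₀ (2 * (ε + δ))) :=
  exists_matching_center_general μX μt h1 δ hδ hcpl ε x₀ hx₀
end
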